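/- Let L : ℝ × ℝⁿ × ℝⁿ → ℝ be C² (in (t,q,v)), α : ℝ × ℝⁿ → ℝ be C¹ in x, and β : ℝ → ℝ continuous. Define the functional 𝓘[x] = ∫₀ᵀ L(t, x(t), x'(t)) dt − G(∫₀ᵀ α(t, x(t)) dt) where G' = β. If x* is a C² critical point of 𝓘 among C² paths with fixed endpoints x(0) = x₀ and x(T) = x_f, then x* satisfies the memory Euler–Lagrange equation d/dt(∂L/∂v) − ∂L/∂q = −𝒦 · ∂α/∂x(t, x*(t)) with constant 𝒦 = β(∫₀ᵀ α(τ, x*(τ)) dτ). -/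

import Mathlib

/-!
Differentiating under the integral sign, and using the chain rule for `G`, the first variation
in the direction `h` is
`∫ ⟪∂L/∂q, h⟫ + ⟪∂L/∂v, h'⟫ - β (∫ α) * ∫ ⟪∂α/∂x, h⟫`.
The partial gradients of `L` are Riesz representatives of restrictions of its total derivative, so
`∂L/∂v` is `C¹` along the `C²` path, and integration by parts (the boundary terms vanish because
`h` does) rewrites the variation as `∫ ⟪∂L/∂q - d/dt ∂L/∂v - β (∫ α) • ∂α/∂x, h⟫`. This vanishes for
every smooth `h` vanishing at the endpoints, so the continuous integrand vanishes on `[0, T]` by the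
fundamental lemma of the calculus of variations.
-/

open MeasureTheory intervalIntegral

open Set Metric InnerProductSpace
open scoped RealInnerProductSpace ContDiff

theorem hasDerivAt_intervalIntegral_of_continuous {V : Type*} [NormedAddCommGroup V]
    [NormedSpace ℝ V] [CompleteSpace V] {F F' : ℝ → ℝ → V} {a b ε₀ : ℝ}
    (hF : Continuous (Function.uncurry F)) (hF' : Continuous (Function.uncurry F'))
    (hderiv : ∀ ε t, HasDerivAt (fun e => F e t) (F' ε t) ε) :
    HasDerivAt (fun ε => ∫ t in a..b, F ε t) (∫ t in a..b, F' ε₀ t) ε₀ := by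
  obtain ⟨C, hC⟩ := (isCompact_closedBall ε₀ 1 |>.prod isCompact_uIcc).exists_bound_of_continuousOn
    (hF'.continuousOn (s := closedBall ε₀ 1 ×ˢ uIcc a b))
  have hslice {G : ℝ → ℝ → V} (hG : Continuous (Function.uncurry G)) (ε : ℝ) :
      Continuous (G ε) := hG.comp (continuous_const.prodMk continuous_id)
  refine (hasDerivAt_integral_of_dominated_loc_of_deriv_le (bound := fun _ => C)
    (ball_mem_nhds ε₀ one_pos) (.of_forall fun ε => (hslice hF ε).aestronglyMeasurable)
    ((hslice hF ε₀).intervalIntegrable _ _) (hslice hF' ε₀).aestronglyMeasurable ?_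
    intervalIntegrable_const (.of_forall fun t _ ε _ => hderiv ε t)).2
  exact .of_forall fun t ht ε hε => hC (ε, t) ⟨ball_subset_closedBall hε, uIoc_subset_uIcc ht⟩

theorem integral_inner_deriv_eq_neg {E : Type*} [NormedAddCommGroup E] [InnerProductSpace ℝ E]
    {P h : ℝ → E} {a b : ℝ} (hP : ContDiff ℝ 1 P)
    (hh : ContDiff ℝ 1 h) (ha : h a = 0) (hb : h b = 0) :
    ∫ t in a..b, ⟪P t, deriv h t⟫ = -∫ t in a..b, ⟪deriv P t, h t⟫ := by
  have hP' := hP.continuous_deriv le_rfl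
  have hh' := hh.continuous_deriv le_rfl
  have hprod : ∀ t, HasDerivAt (fun s => ⟪P s, h s⟫) (⟪P t, deriv h t⟫ + ⟪deriv P t, h t⟫) t :=
    fun t => ((hP.differentiable one_ne_zero t).hasDerivAt).inner ℝ
      ((hh.differentiable one_ne_zero t).hasDerivAt)
  have hftc := integral_eq_sub_of_hasDerivAt (fun t _ => hprod t)
    (((hP.continuous.inner hh').add (hP'.inner hh.continuous)).intervalIntegrable a b)
  rw [integral_add ((hP.continuous.inner hh').intervalIntegrable a b)
    ((hP'.inner hh.continuous).intervalIntegrable a b), ha, hb, inner_zero_right,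
    inner_zero_right, sub_zero] at hftc
  exact eq_neg_of_add_eq_zero_left hftc

theorem eqOn_zero_of_forall_integral_inner_eq_zero {E : Type*} [NormedAddCommGroup E]
    [InnerProductSpace ℝ E] [CompleteSpace E] {f : ℝ → E} {a b : ℝ} (hab : a < b)
    (hf : ContinuousOn f (Icc a b))
    (hφ : ∀ φ : ℝ → E, ContDiff ℝ ∞ φ → φ a = 0 → φ b = 0 → ∫ t in a..b, ⟪f t, φ t⟫ = 0) :
    EqOn f 0 (Icc a b) := by
  have hae : ∀ᵐ t, t ∈ Ioo a b → f t = 0 := by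
    refine isOpen_Ioo.ae_eq_zero_of_integral_contDiff_smul_eq_zero
      ((hf.mono Ioo_subset_Icc_self).locallyIntegrableOn measurableSet_Ioo) fun g hg _ hgU => ?_
    have hg0 : ∀ t ∉ Ioo a b, g t = 0 := fun t ht =>
      image_eq_zero_of_notMem_tsupport fun h => ht (hgU h)
    rw [← setIntegral_eq_integral_of_forall_compl_eq_zero fun t ht => by
      rw [hg0 t fun h => ht (Ioo_subset_Ioc_self h), zero_smul]]
    refine integral_eq_zero_of_forall_integral_inner_eq_zero ℝ _
      (((hg.continuous.continuousOn.smul hf).integrableOn_Icc).mono_set Ioc_subset_Icc_self)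
      fun c => ?_
    have htest := hφ (fun t => g t • c) (hg.smul contDiff_const)
      (by simp [hg0 a (by simp)]) (by simp [hg0 b (by simp)])
    rw [integral_of_le hab.le] at htest
    simpa only [real_inner_smul_left, real_inner_smul_right, real_inner_comm] using htest
  refine Measure.eqOn_of_ae_eq (μ := volume) ?_ hf continuousOn_const
    (by rw [interior_Icc, closure_Ioo hab.ne])
  rw [Filter.EventuallyEq, ← Measure.restrict_congr_set Ioo_ae_eq_Icc]
  exact (ae_restrict_iff' measurableSet_Ioo).2 hae

section Gradient

variable {E : Type*} [NormedAddCommGroup E] [InnerProductSpace ℝ E] [CompleteSpace E]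

theorem HasGradientAt.hasDerivAt_add_smul {f : E → ℝ} {g x v : E} {ε : ℝ}
    (hf : HasGradientAt f g (x + ε • v)) :
    HasDerivAt (fun e : ℝ => f (x + e • v)) ⟪g, v⟫ ε := by
  have hline : HasDerivAt (fun e : ℝ => x + e • v) v ε := by
    simpa using ((hasDerivAt_id ε).smul_const v).const_add x
  exact hf.hasFDerivAt.comp_hasDerivAt ε hline

theorem HasGradientAt.toDual_eq_fderiv_comp {X : Type*} [NormedAddCommGroup X] [NormedSpace ℝ X]
    {F : X → ℝ} {φ : E → X} {J : E →L[ℝ] X} {y g : E}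
    (hF : DifferentiableAt ℝ F (φ y)) (hφ : HasFDerivAt φ J y) (hg : HasGradientAt (F ∘ φ) g y) :
    toDual ℝ E g = (fderiv ℝ F (φ y)).comp J :=
  hg.hasFDerivAt.unique (hF.hasFDerivAt.comp y hφ)

theorem contDiff_of_toDual_eq_fderiv_comp {X : Type*} [NormedAddCommGroup X] [NormedSpace ℝ X]
    {F : X → ℝ} {k : WithTop ℕ∞} (hF : ContDiff ℝ (k + 1) F) (J : E →L[ℝ] X) {g : X → E}
    (hg : ∀ p, toDual ℝ E (g p) = (fderiv ℝ F p).comp J) : ContDiff ℝ k g := by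
  have hfun : g = fun p => (toDual ℝ E).symm ((fderiv ℝ F p).comp J) := by
    funext p; rw [← hg, LinearIsometryEquiv.symm_apply_apply]
  rw [hfun]
  exact (toDual ℝ E).symm.contDiff.comp
    ((ContinuousLinearMap.compL ℝ E X ℝ).flip J |>.contDiff.comp (hF.fderiv_right le_rfl))

end Gradient

section Lagrangian

variable {E : Type*} [NormedAddCommGroup E] [InnerProductSpace ℝ E] [CompleteSpace E]
  {L : ℝ → E → E → ℝ} {Lq Lv : ℝ → E → E → E}

open ContinuousLinearMap

theorem toDual_gradPos_eq (hLq : ∀ t q v, HasGradientAt (fun q' => L t q' v) (Lq t q v) q)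
    {t : ℝ} {q v : E}
    (hL : DifferentiableAt ℝ (fun p : ℝ × E × E => L p.1 p.2.1 p.2.2) (t, q, v)) :
    toDual ℝ E (Lq t q v) = (fderiv ℝ (fun p : ℝ × E × E => L p.1 p.2.1 p.2.2) (t, q, v)).comp
      (inr ℝ ℝ (E × E) ∘L inl ℝ E E) := by
  have hslot : HasFDerivAt (fun q' : E => ((t, q', v) : ℝ × E × E))
      (inr ℝ ℝ (E × E) ∘L inl ℝ E E) q := by
    simpa using ((inr ℝ ℝ (E × E) ∘L inl ℝ E E).hasFDerivAt (x := q)).const_add (t, 0, v)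
  exact HasGradientAt.toDual_eq_fderiv_comp (φ := fun q' => (t, q', v)) hL hslot (hLq t q v)

theorem toDual_gradVel_eq (hLv : ∀ t q v, HasGradientAt (fun v' => L t q v') (Lv t q v) v)
    {t : ℝ} {q v : E}
    (hL : DifferentiableAt ℝ (fun p : ℝ × E × E => L p.1 p.2.1 p.2.2) (t, q, v)) :
    toDual ℝ E (Lv t q v) = (fderiv ℝ (fun p : ℝ × E × E => L p.1 p.2.1 p.2.2) (t, q, v)).comp
      (inr ℝ ℝ (E × E) ∘L inr ℝ E E) := by
  have hslot : HasFDerivAt (fun v' : E => ((t, q, v') : ℝ × E × E))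
      (inr ℝ ℝ (E × E) ∘L inr ℝ E E) v := by
    simpa using ((inr ℝ ℝ (E × E) ∘L inr ℝ E E).hasFDerivAt (x := v)).const_add (t, q, 0)
  exact HasGradientAt.toDual_eq_fderiv_comp (φ := fun v' => (t, q, v')) hL hslot (hLv t q v)

theorem contDiff_gradPos {k : WithTop ℕ∞}
    (hL : ContDiff ℝ (k + 1) fun p : ℝ × E × E => L p.1 p.2.1 p.2.2)
    (hLq : ∀ t q v, HasGradientAt (fun q' => L t q' v) (Lq t q v) q) :
    ContDiff ℝ k fun p : ℝ × E × E => Lq p.1 p.2.1 p.2.2 :=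
  contDiff_of_toDual_eq_fderiv_comp hL _ fun p =>
    toDual_gradPos_eq hLq (hL.differentiable (by simp) p)

theorem contDiff_gradVel {k : WithTop ℕ∞}
    (hL : ContDiff ℝ (k + 1) fun p : ℝ × E × E => L p.1 p.2.1 p.2.2)
    (hLv : ∀ t q v, HasGradientAt (fun v' => L t q v') (Lv t q v) v) :
    ContDiff ℝ k fun p : ℝ × E × E => Lv p.1 p.2.1 p.2.2 :=
  contDiff_of_toDual_eq_fderiv_comp hL _ fun p =>
    toDual_gradVel_eq hLv (hL.differentiable (by simp) p)

theorem hasDerivAt_lagrangian_add_smul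
    (hL : Differentiable ℝ fun p : ℝ × E × E => L p.1 p.2.1 p.2.2)
    (hLq : ∀ t q v, HasGradientAt (fun q' => L t q' v) (Lq t q v) q)
    (hLv : ∀ t q v, HasGradientAt (fun v' => L t q v') (Lv t q v) v)
    (t : ℝ) (q v a b : E) (ε : ℝ) :
    HasDerivAt (fun e : ℝ => L t (q + e • a) (v + e • b))
      (⟪Lq t (q + ε • a) (v + ε • b), a⟫ + ⟪Lv t (q + ε • a) (v + ε • b), b⟫) ε := by
  have hline : HasDerivAt (fun e : ℝ => ((t, q + e • a, v + e • b) : ℝ × E × E))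
      (inr ℝ ℝ (E × E) (inl ℝ E E a) + inr ℝ ℝ (E × E) (inr ℝ E E b)) ε := by
    simpa using (hasDerivAt_const ε t).prodMk
      ((((hasDerivAt_id ε).smul_const a).const_add q).prodMk
        (((hasDerivAt_id ε).smul_const b).const_add v))
  have h := (hL (t, q + ε • a, v + ε • b)).hasFDerivAt.comp_hasDerivAt ε hline
  rw [map_add] at h
  rw [← toDual_apply_apply (𝕜 := ℝ), ← toDual_apply_apply (𝕜 := ℝ),
    toDual_gradPos_eq hLq (hL _), toDual_gradVel_eq hLv (hL _)]
  exact h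

theorem continuous_gradPos_along (hL : ContDiff ℝ 1 fun p : ℝ × E × E => L p.1 p.2.1 p.2.2)
    (hLq : ∀ t q v, HasGradientAt (fun q' => L t q' v) (Lq t q v) q)
    {x : ℝ → E} (hx : ContDiff ℝ 1 x) :
    Continuous fun t => Lq t (x t) (deriv x t) :=
  (contDiff_gradPos (k := 0) (by simpa using hL) hLq).continuous.comp
    (continuous_id.prodMk (hx.continuous.prodMk (hx.continuous_deriv le_rfl)))

theorem contDiff_gradVel_along (hL : ContDiff ℝ 2 fun p : ℝ × E × E => L p.1 p.2.1 p.2.2)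
    (hLv : ∀ t q v, HasGradientAt (fun v' => L t q v') (Lv t q v) v)
    {x : ℝ → E} (hx : ContDiff ℝ 2 x) :
    ContDiff ℝ 1 fun t => Lv t (x t) (deriv x t) :=
  (contDiff_gradVel (k := 1) hL hLv).comp
    (contDiff_id.prodMk ((hx.of_le one_le_two).prodMk hx.deriv'))

end Lagrangian

section FirstVariation

variable {E : Type*} [NormedAddCommGroup E] [InnerProductSpace ℝ E] [CompleteSpace E]
  {L : ℝ → E → E → ℝ} {Lq Lv : ℝ → E → E → E}

theorem hasDerivAt_integral_lagrangian_add_smul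
    (hL : ContDiff ℝ 1 fun p : ℝ × E × E => L p.1 p.2.1 p.2.2)
    (hLq : ∀ t q v, HasGradientAt (fun q' => L t q' v) (Lq t q v) q)
    (hLv : ∀ t q v, HasGradientAt (fun v' => L t q v') (Lv t q v) v)
    {x h : ℝ → E} (hx : ContDiff ℝ 1 x) (hh : ContDiff ℝ 1 h) (a b : ℝ) :
    HasDerivAt (fun ε : ℝ => ∫ t in a..b, L t (x t + ε • h t) (deriv x t + ε • deriv h t))
      (∫ t in a..b, (⟪Lq t (x t) (deriv x t), h t⟫ + ⟪Lv t (x t) (deriv x t), deriv h t⟫)) 0 := by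
  have hx' := hx.continuous_deriv le_rfl
  have hh' := hh.continuous_deriv le_rfl
  have hjet : Continuous fun p : ℝ × ℝ =>
      ((p.2, x p.2 + p.1 • h p.2, deriv x p.2 + p.1 • deriv h p.2) : ℝ × E × E) := by
    have := hx.continuous; have := hh.continuous; fun_prop
  have hLq' := (contDiff_gradPos (k := 0) (by simpa using hL) hLq).continuous
  have hLv' := (contDiff_gradVel (k := 0) (by simpa using hL) hLv).continuous
  simpa using hasDerivAt_intervalIntegral_of_continuous (a := a) (b := b) (ε₀ := 0)
    (F := fun ε t => L t (x t + ε • h t) (deriv x t + ε • deriv h t))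
    (F' := fun ε t => ⟪Lq t (x t + ε • h t) (deriv x t + ε • deriv h t), h t⟫ +
      ⟪Lv t (x t + ε • h t) (deriv x t + ε • deriv h t), deriv h t⟫)
    (hL.continuous.comp hjet)
    (((hLq'.comp hjet).inner (hh.continuous.comp continuous_snd)).add
      ((hLv'.comp hjet).inner (hh'.comp continuous_snd)))
    fun ε t => hasDerivAt_lagrangian_add_smul (hL.differentiable one_ne_zero) hLq hLv t _ _ _ _ ε

theorem hasDerivAt_integral_potential_add_smul {α : ℝ → E → ℝ} {αx : ℝ → E → E}
    (hα : ∀ t q, HasGradientAt (α t) (αx t q) q)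
    (hαc : Continuous fun p : ℝ × E => α p.1 p.2) (hαxc : Continuous fun p : ℝ × E => αx p.1 p.2)
    {x h : ℝ → E} (hx : Continuous x) (hh : Continuous h) (a b : ℝ) :
    HasDerivAt (fun ε : ℝ => ∫ t in a..b, α t (x t + ε • h t))
      (∫ t in a..b, ⟪αx t (x t), h t⟫) 0 := by
  have hpath : Continuous fun p : ℝ × ℝ => ((p.2, x p.2 + p.1 • h p.2) : ℝ × E) := by fun_prop
  simpa using hasDerivAt_intervalIntegral_of_continuous (a := a) (b := b) (ε₀ := 0)
    (F := fun ε t => α t (x t + ε • h t)) (F' := fun ε t => ⟪αx t (x t + ε • h t), h t⟫)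
    (hαc.comp hpath)
    ((hαxc.comp hpath).inner (hh.comp continuous_snd))
    fun ε t => (hα t _).hasDerivAt_add_smul

theorem hasDerivAt_action_variation
    (hL : ContDiff ℝ 2 fun p : ℝ × E × E => L p.1 p.2.1 p.2.2)
    (hLq : ∀ t q v, HasGradientAt (fun q' => L t q' v) (Lq t q v) q)
    (hLv : ∀ t q v, HasGradientAt (fun v' => L t q v') (Lv t q v) v)
    {x h : ℝ → E} (hx : ContDiff ℝ 2 x) (hh : ContDiff ℝ 1 h) {a b : ℝ}
    (ha : h a = 0) (hb : h b = 0) :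
    HasDerivAt (fun ε : ℝ => ∫ t in a..b, L t (x t + ε • h t) (deriv x t + ε • deriv h t))
      (∫ t in a..b, ⟪Lq t (x t) (deriv x t) - deriv (fun s => Lv s (x s) (deriv x s)) t, h t⟫)
      0 := by
  have hQ := continuous_gradPos_along (hL.of_le one_le_two) hLq (hx.of_le one_le_two)
  have hP := contDiff_gradVel_along hL hLv hx
  convert hasDerivAt_integral_lagrangian_add_smul (hL.of_le one_le_two) hLq hLv
    (hx.of_le one_le_two) hh a b using 1
  simp only [inner_sub_left]
  rw [integral_sub ((hQ.inner hh.continuous).intervalIntegrable a b)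
      (((hP.continuous_deriv le_rfl).inner hh.continuous).intervalIntegrable a b),
    integral_add ((hQ.inner hh.continuous).intervalIntegrable a b)
      ((hP.continuous.inner (hh.continuous_deriv le_rfl)).intervalIntegrable a b),
    integral_inner_deriv_eq_neg hP hh ha hb, sub_eq_add_neg]

theorem hasDerivAt_memory_variation {α : ℝ → E → ℝ} {αx : ℝ → E → E} {G β : ℝ → ℝ}
    (hG : ∀ z, HasDerivAt G (β z) z) (hα : ∀ t q, HasGradientAt (α t) (αx t q) q)
    (hαc : Continuous fun p : ℝ × E => α p.1 p.2) (hαxc : Continuous fun p : ℝ × E => αx p.1 p.2)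
    {x h : ℝ → E} (hx : Continuous x) (hh : Continuous h) (a b : ℝ) :
    HasDerivAt (fun ε : ℝ => G (∫ t in a..b, α t (x t + ε • h t)))
      (∫ t in a..b, ⟪β (∫ τ in a..b, α τ (x τ)) • αx t (x t), h t⟫) 0 := by
  have hchain := (hG _).comp 0 (hasDerivAt_integral_potential_add_smul hα hαc hαxc hx hh a b)
  simpa only [zero_smul, add_zero, real_inner_smul_left, intervalIntegral.integral_const_mul,
    Function.comp_def] using hchain

end FirstVariation

theorem memory_euler_lagrange_general (n : ℕ) (T : ℝ) (hT : 0 < T)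
    (L : ℝ → EuclideanSpace ℝ (Fin n) → EuclideanSpace ℝ (Fin n) → ℝ)
    (hL : ContDiff ℝ 2 fun p : ℝ × EuclideanSpace ℝ (Fin n) × EuclideanSpace ℝ (Fin n) =>
      L p.1 p.2.1 p.2.2)
    (Lq Lv : ℝ → EuclideanSpace ℝ (Fin n) → EuclideanSpace ℝ (Fin n) → EuclideanSpace ℝ (Fin n))
    (hLq : ∀ t q v, HasGradientAt (fun q' => L t q' v) (Lq t q v) q)
    (hLv : ∀ t q v, HasGradientAt (fun v' => L t q v') (Lv t q v) v)
    (α : ℝ → EuclideanSpace ℝ (Fin n) → ℝ)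
    (αx : ℝ → EuclideanSpace ℝ (Fin n) → EuclideanSpace ℝ (Fin n))
    (hαgrad : ∀ t q, HasGradientAt (α t) (αx t q) q)
    (hαcont : Continuous fun p : ℝ × EuclideanSpace ℝ (Fin n) => α p.1 p.2)
    (hαxcont : Continuous fun p : ℝ × EuclideanSpace ℝ (Fin n) => αx p.1 p.2)
    (β : ℝ → ℝ)
    (G : ℝ → ℝ) (hG : ∀ z, HasDerivAt G (β z) z)
    (x : ℝ → EuclideanSpace ℝ (Fin n)) (hx : ContDiff ℝ 2 x)
    (hcrit : ∀ h : ℝ → EuclideanSpace ℝ (Fin n), ContDiff ℝ 2 h →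
      h 0 = 0 → h T = 0 →
      HasDerivAt (fun ε : ℝ =>
        (∫ t in (0:ℝ)..T, L t (x t + ε • h t) (deriv x t + ε • deriv h t))
          - G (∫ t in (0:ℝ)..T, α t (x t + ε • h t))) 0 0) :
    ∀ t ∈ Set.Icc (0:ℝ) T,
      deriv (fun s => Lv s (x s) (deriv x s)) t - Lq t (x t) (deriv x t)
        = -(β (∫ τ in (0:ℝ)..T, α τ (x τ))) • αx t (x t) := by
  set K := β (∫ τ in (0:ℝ)..T, α τ (x τ))
  have hEL : Continuous fun t =>
      Lq t (x t) (deriv x t) - deriv (fun s => Lv s (x s) (deriv x s)) t :=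
    (continuous_gradPos_along (hL.of_le one_le_two) hLq (hx.of_le one_le_two)).sub
      ((contDiff_gradVel_along hL hLv hx).continuous_deriv le_rfl)
  have hαx : Continuous fun t => K • αx t (x t) :=
    (hαxcont.comp (continuous_id.prodMk hx.continuous)).const_smul K
  have hweak : ∀ φ : ℝ → EuclideanSpace ℝ (Fin n), ContDiff ℝ ∞ φ → φ 0 = 0 → φ T = 0 →
      ∫ t in (0:ℝ)..T, ⟪Lq t (x t) (deriv x t) - deriv (fun s => Lv s (x s) (deriv x s)) t
        - K • αx t (x t), φ t⟫ = 0 := by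
    intro φ hφ hφ0 hφT
    have hφ2 : ContDiff ℝ 2 φ := hφ.of_le (WithTop.coe_le_coe.mpr le_top)
    have hvar := (hasDerivAt_action_variation hL hLq hLv hx (hφ2.of_le one_le_two) hφ0 hφT).sub
      (hasDerivAt_memory_variation hG hαgrad hαcont hαxcont hx.continuous hφ.continuous 0 T)
    rw [← integral_sub ((hEL.inner hφ.continuous).intervalIntegrable _ _)
      ((hαx.inner hφ.continuous).intervalIntegrable _ _)] at hvar
    simpa only [inner_sub_left] using hvar.unique (hcrit φ hφ2 hφ0 hφT)
  intro t ht
  have hzero := eqOn_zero_of_forall_integral_inner_eq_zero hT (hEL.sub hαx).continuousOn hweak ht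
  simp only [Pi.sub_apply, Pi.zero_apply] at hzero
  linear_combination (norm := module) -hzero

/-- Main result: a critical point of the risk-adjusted information functional
`𝓘[x] = ∫₀ᵀ L(t, x, x') dt − G(∫₀ᵀ α(t, x) dt)` with fixed endpoints satisfies
the memory Euler–Lagrange equation
`d/dt(∂L/∂v) − ∂L/∂q = −𝒦 ∂α/∂x` with `𝒦 = β(∫₀ᵀ α(τ, x(τ)) dτ)`. -/
theorem memory_euler_lagrange (n : ℕ) (T : ℝ) (hT : 0 < T)
    (L : ℝ → EuclideanSpace ℝ (Fin n) → EuclideanSpace ℝ (Fin n) → ℝ)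
    (hL : ContDiff ℝ 2 fun p : ℝ × EuclideanSpace ℝ (Fin n) × EuclideanSpace ℝ (Fin n) =>
      L p.1 p.2.1 p.2.2)
    (Lq Lv : ℝ → EuclideanSpace ℝ (Fin n) → EuclideanSpace ℝ (Fin n) → EuclideanSpace ℝ (Fin n))
    (hLq : ∀ t q v, HasGradientAt (fun q' => L t q' v) (Lq t q v) q)
    (hLv : ∀ t q v, HasGradientAt (fun v' => L t q v') (Lv t q v) v)
    (α : ℝ → EuclideanSpace ℝ (Fin n) → ℝ)
    (αx : ℝ → EuclideanSpace ℝ (Fin n) → EuclideanSpace ℝ (Fin n))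
    (hαgrad : ∀ t q, HasGradientAt (α t) (αx t q) q)
    (hαcont : Continuous fun p : ℝ × EuclideanSpace ℝ (Fin n) => α p.1 p.2)
    (hαxcont : Continuous fun p : ℝ × EuclideanSpace ℝ (Fin n) => αx p.1 p.2)
    (β : ℝ → ℝ) (hβ : Continuous β)
    (G : ℝ → ℝ) (hG : ∀ z, HasDerivAt G (β z) z)
    (x₀ xf : EuclideanSpace ℝ (Fin n))
    (x : ℝ → EuclideanSpace ℝ (Fin n)) (hx : ContDiff ℝ 2 x)
    (hbc0 : x 0 = x₀) (hbcT : x T = xf)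
    (hcrit : ∀ h : ℝ → EuclideanSpace ℝ (Fin n), ContDiff ℝ 2 h →
      h 0 = 0 → h T = 0 →
      HasDerivAt (fun ε : ℝ =>
        (∫ t in (0:ℝ)..T, L t (x t + ε • h t) (deriv x t + ε • deriv h t))
          - G (∫ t in (0:ℝ)..T, α t (x t + ε • h t))) 0 0) :
    ∀ t ∈ Set.Icc (0:ℝ) T,
      deriv (fun s => Lv s (x s) (deriv x s)) t - Lq t (x t) (deriv x t)
        = -(β (∫ τ in (0:ℝ)..T, α τ (x τ))) • αx t (x t) :=
  memory_euler_lagrange_general n T hT L hL Lq Lv hLq hLv α αx hαgrad hαcont hαxcont β G hG x hx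
    hcrit
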